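/- arXiv:1209.1145 — 4 statements merged into one kernel-verified Lean document; each statement's English description precedes it below -/
import Mathlib

section
/- Non-exchangeability of the directly restricted three-urn scheme: there exist N ∈ ℕ and counts m₁, m₂, m₃ ∈ {1,…,N} such that, defining p*(x | m, N) = (m_k/(N+1-m_k)) / Σ_{j=1}^3 (m_j/(N+1-m_j)) for x = e_k (the indicator vector with a one in position k), the two-step probability p*(e₁ | m, N) · p*(e₂ | m + e₁, N+1) ≠ p*(e₂ | m, N) · p*(e₁ | m + e₂, N+1). -/
open Finset

/-- Directly restricted three-urn predictive: probability that the single red ball is in urn `k`,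
given red counts `m` out of `N` total draws. -/
noncomputable def pStar (N : ℕ) (m : Fin 3 → ℕ) (k : Fin 3) : ℝ :=
  ((m k : ℝ) / ((N : ℝ) + 1 - m k)) / ∑ j, (m j : ℝ) / ((N : ℝ) + 1 - m j)

/-! With `N = 2` and `m = (1, 2, 1)` the odds `m_k / (N + 1 - m_k)` are `(1/2, 2, 1/2)`; after
drawing urn 1 first they become `(1, 1, 1/3)` and after drawing urn 2 first `(1/3, 3, 1/3)`.
The two orders therefore have probabilities `1/6 · 3/7 = 1/14` and `2/3 · 1/11 = 2/33`. -/

theorem pStar_eq_odds_div_sum (N : ℕ) (m : Fin 3 → ℕ) (k : Fin 3) :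
    pStar N m k = ((m k : ℝ) / ((N : ℝ) + 1 - m k)) /
      ((m 0 : ℝ) / ((N : ℝ) + 1 - m 0) + (m 1 : ℝ) / ((N : ℝ) + 1 - m 1) +
        (m 2 : ℝ) / ((N : ℝ) + 1 - m 2)) := by
  rw [pStar, Fin.sum_univ_three]

theorem directly_restricted_not_exchangeable :
    ∃ (N : ℕ) (m : Fin 3 → ℕ), (∀ i, 1 ≤ m i ∧ m i ≤ N) ∧
      pStar N m 0 * pStar (N + 1) (fun j => m j + if j = 0 then 1 else 0) 1 ≠
        pStar N m 1 * pStar (N + 1) (fun j => m j + if j = 1 then 1 else 0) 0 := by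
  refine ⟨2, ![1, 2, 1], by decide, ?_⟩
  have after_first : (fun j => ![1, 2, 1] j + if j = 0 then 1 else 0) = ![2, 2, 1] := by
    funext j; fin_cases j <;> rfl
  have after_second : (fun j => ![1, 2, 1] j + if j = 1 then 1 else 0) = ![1, 3, 1] := by
    funext j; fin_cases j <;> rfl
  have p₀ : pStar 2 ![1, 2, 1] 0 = 1 / 6 := by norm_num [pStar_eq_odds_div_sum, Matrix.cons_val_two]
  have p₁ : pStar 2 ![1, 2, 1] 1 = 2 / 3 := by norm_num [pStar_eq_odds_div_sum, Matrix.cons_val_two]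
  have p₁_after_first : pStar 3 ![2, 2, 1] 1 = 3 / 7 := by norm_num [pStar_eq_odds_div_sum, Matrix.cons_val_two]
  have p₀_after_second : pStar 3 ![1, 3, 1] 0 = 1 / 11 := by norm_num [pStar_eq_odds_div_sum, Matrix.cons_val_two]
  rw [after_first, after_second, p₀, p₁, p₁_after_first, p₀_after_second]
  norm_num
end

section
/- The sum of independent Bernoulli random variables converges to Poisson in the infinitesimal limit (law of rare events, finite quantitative version): if Z₁,…,Z_K are independent Bernoulli(π_k) with Σ_k π_k = λ, then the total variation distance between the law of Σ_k Z_k and the Poisson(λ) distribution is at most Σ_{k=1}^K π_k². -/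
/-!
Both laws factor as convolutions over `k`: the law of `∑ Z_k` is the convolution of the Bernoulli
laws `B(π_k)`, and `Poisson(λ)` is the convolution of the `Poisson(π_k)`. For sequences on `ℕ`,
`‖f * g - f' * g'‖₁ ≤ ‖f - f'‖₁ ‖g‖₁ + ‖f'‖₁ ‖g - g'‖₁`, and probability vectors have `ℓ¹` norm one,
so the `ℓ¹` distance is at most the sum of the distances of the factors. Each factor contributes
`‖B(p) - Poisson(p)‖₁ = 2p(1 - e^{-p}) ≤ 2p²`.
-/

open Finset

/-- Poisson-binomial pmf (zero for s > K). -/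
def poiBin {K : ℕ} (π : Fin K → ℝ) (s : ℕ) : ℝ :=
  ∑ w ∈ Finset.univ.filter (fun w : Fin K → Bool => (Finset.univ.filter (fun k => w k)).card = s),
    ∏ k, (π k) ^ (if w k then 1 else 0 : ℕ) * (1 - π k) ^ (if w k then 0 else 1 : ℕ)

/-- Poisson pmf with rate λ. -/
noncomputable def poissonPMF (lam : ℝ) (s : ℕ) : ℝ :=
  Real.exp (-lam) * lam ^ s / (Nat.factorial s : ℝ)


def natConv (f g : ℕ → ℝ) (s : ℕ) : ℝ := ∑ kl ∈ antidiagonal s, f kl.1 * g kl.2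

section natConv

variable {f f' g g' : ℕ → ℝ}

lemma hasSum_natConv (hf : Summable fun s => |f s|) (hg : Summable fun s => |g s|) :
    HasSum (natConv f g) ((∑' s, f s) * ∑' s, g s) := by
  rw [tsum_mul_tsum_eq_tsum_sum_antidiagonal_of_summable_norm (R := ℝ) hf hg]
  exact (summable_norm_sum_mul_antidiagonal_of_summable_norm (R := ℝ) hf hg).of_norm.hasSum

lemma summable_abs_natConv (hf : Summable fun s => |f s|) (hg : Summable fun s => |g s|) :
    Summable fun s => |natConv f g s| :=
  summable_norm_sum_mul_antidiagonal_of_summable_norm (R := ℝ) hf hg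

lemma abs_natConv_le (s : ℕ) : |natConv f g s| ≤ natConv |f| |g| s :=
  (abs_sum_le_sum_abs _ _).trans_eq (sum_congr rfl fun _ _ => abs_mul _ _)

lemma tsum_abs_natConv_le (hf : Summable fun s => |f s|) (hg : Summable fun s => |g s|) :
    ∑' s, |natConv f g s| ≤ (∑' s, |f s|) * ∑' s, |g s| := by
  have hasSum_abs := hasSum_natConv (f := |f|) (g := |g|) (by simpa using hf) (by simpa using hg)
  simp only [Pi.abs_apply] at hasSum_abs
  exact hasSum_le abs_natConv_le (summable_abs_natConv hf hg).hasSum hasSum_abs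

lemma natConv_sub_natConv (s : ℕ) :
    natConv f g s - natConv f' g' s = natConv (f - f') g s + natConv f' (g - g') s := by
  simp only [natConv, ← sum_sub_distrib, ← sum_add_distrib, Pi.sub_apply]
  exact sum_congr rfl fun _ _ => by ring

lemma tsum_abs_natConv_sub_natConv_le (hf : Summable fun s => |f s|)
    (hf' : Summable fun s => |f' s|) (hg : Summable fun s => |g s|)
    (hg' : Summable fun s => |g' s|) :
    ∑' s, |natConv f g s - natConv f' g' s| ≤
      (∑' s, |f s - f' s|) * (∑' s, |g s|) + (∑' s, |f' s|) * ∑' s, |g s - g' s| := by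
  have hff' : Summable fun s => |(f - f') s| := (hf.of_abs.sub hf'.of_abs).abs
  have hgg' : Summable fun s => |(g - g') s| := (hg.of_abs.sub hg'.of_abs).abs
  have h₁ := summable_abs_natConv hff' hg
  have h₂ := summable_abs_natConv hf' hgg'
  simp_rw [natConv_sub_natConv]
  calc ∑' s, |natConv (f - f') g s + natConv f' (g - g') s|
      ≤ ∑' s, (|natConv (f - f') g s| + |natConv f' (g - g') s|) :=
        ((h₁.add h₂).of_nonneg_of_le (fun _ => abs_nonneg _) fun _ => abs_add_le _ _).tsum_le_tsum
          (fun _ => abs_add_le _ _) (h₁.add h₂)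
    _ = ∑' s, |natConv (f - f') g s| + ∑' s, |natConv f' (g - g') s| := h₁.tsum_add h₂
    _ ≤ _ := add_le_add (tsum_abs_natConv_le hff' hg) (tsum_abs_natConv_le hf' hgg')

end natConv

lemma HasSum.tsum_abs_eq_of_nonneg {f : ℕ → ℝ} {a : ℝ} (hf : HasSum f a) (hf₀ : ∀ s, 0 ≤ f s) :
    ∑' s, |f s| = a := by
  simp_rw [abs_of_nonneg (hf₀ _)]
  exact hf.tsum_eq

def bernoulliPMF (p : ℝ) (s : ℕ) : ℝ := if s = 0 then 1 - p else if s = 1 then p else 0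

lemma hasSum_bernoulliPMF (p : ℝ) : HasSum (bernoulliPMF p) 1 := by
  have h : HasSum (bernoulliPMF p) (∑ s ∈ range 2, bernoulliPMF p s) :=
    hasSum_sum_of_ne_finset_zero fun s hs => by
      simp only [mem_range, not_lt] at hs
      simp [bernoulliPMF, show s ≠ 0 by omega, show s ≠ 1 by omega]
  rwa [show ∑ s ∈ range 2, bernoulliPMF p s = 1 by simp [sum_range_succ, bernoulliPMF]] at h

lemma natConv_bernoulliPMF_zero (p : ℝ) (g : ℕ → ℝ) :
    natConv (bernoulliPMF p) g 0 = (1 - p) * g 0 := by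
  simp [natConv, bernoulliPMF]

lemma natConv_bernoulliPMF_succ (p : ℝ) (g : ℕ → ℝ) (s : ℕ) :
    natConv (bernoulliPMF p) g (s + 1) = (1 - p) * g (s + 1) + p * g s := by
  rw [natConv, Nat.sum_antidiagonal_succ, sum_eq_single_of_mem (0, s) (by simp)]
  · simp [bernoulliPMF]
  · rintro ⟨i, j⟩ hij hne
    have : i ≠ 0 := by rintro rfl; simp_all
    simp [bernoulliPMF, this]

lemma poissonPMF_nonneg {lam : ℝ} (hlam : 0 ≤ lam) (s : ℕ) : 0 ≤ poissonPMF lam s := by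
  unfold poissonPMF
  positivity

lemma hasSum_poissonPMF (lam : ℝ) : HasSum (poissonPMF lam) 1 := by
  have h := (NormedSpace.expSeries_div_hasSum_exp lam).mul_left (Real.exp (-lam))
  rw [← Real.exp_eq_exp_ℝ, ← Real.exp_add, neg_add_cancel, Real.exp_zero] at h
  unfold poissonPMF
  simp_rw [mul_div_assoc]
  exact h

lemma natConv_poissonPMF (a b : ℝ) :
    natConv (poissonPMF a) (poissonPMF b) = poissonPMF (a + b) := by
  ext s
  rw [natConv, Nat.sum_antidiagonal_eq_sum_range_succ_mk, poissonPMF, add_pow, mul_sum, sum_div]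
  refine sum_congr rfl fun i hi => ?_
  rw [Nat.cast_choose ℝ (Nat.lt_succ_iff.mp (mem_range.mp hi)), neg_add, Real.exp_add, poissonPMF,
    poissonPMF]
  field_simp

lemma tsum_abs_bernoulliPMF_sub_poissonPMF {p : ℝ} (hp : 0 ≤ p) :
    ∑' s, |bernoulliPMF p s - poissonPMF p s| = 2 * p * (1 - Real.exp (-p)) := by
  have hq := hasSum_poissonPMF p
  have hexp : 1 - p ≤ Real.exp (-p) := by linarith [Real.add_one_le_exp (-p)]
  have hexp' : Real.exp (-p) ≤ 1 := Real.exp_le_one_iff.mpr (neg_nonpos.mpr hp)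
  have hq₀ : poissonPMF p 0 = Real.exp (-p) := by simp [poissonPMF]
  have hq₁ : poissonPMF p 1 = p * Real.exp (-p) := by simp [poissonPMF, mul_comm]
  have hb₀ : bernoulliPMF p 0 = 1 - p := by simp [bernoulliPMF]
  have hb₁ : bernoulliPMF p 1 = p := by simp [bernoulliPMF]
  have h₀ : |bernoulliPMF p 0 - poissonPMF p 0| = Real.exp (-p) - (1 - p) := by
    rw [hb₀, hq₀, abs_of_nonpos (sub_nonpos.mpr hexp), neg_sub]
  have h₁ : |bernoulliPMF p 1 - poissonPMF p 1| = p - p * Real.exp (-p) := by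
    rw [hb₁, hq₁, abs_of_nonneg (by nlinarith)]
  have htail (s : ℕ) :
      |bernoulliPMF p (s + 2) - poissonPMF p (s + 2)| = poissonPMF p (s + 2) := by
    simp [bernoulliPMF, abs_of_nonneg (poissonPMF_nonneg hp _)]
  have hmass := hq.summable.sum_add_tsum_nat_add 2
  rw [← ((hasSum_bernoulliPMF p).summable.sub hq.summable).abs.sum_add_tsum_nat_add 2]
  simp only [sum_range_succ, sum_range_zero, zero_add, hq₀, hq₁, hq.tsum_eq] at hmass
  simp only [sum_range_succ, sum_range_zero, zero_add, h₀, h₁, htail]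
  linarith

lemma tsum_abs_bernoulliPMF_sub_poissonPMF_le {p : ℝ} (hp : 0 ≤ p) :
    ∑' s, |bernoulliPMF p s - poissonPMF p s| ≤ 2 * p ^ 2 := by
  rw [tsum_abs_bernoulliPMF_sub_poissonPMF hp]
  nlinarith [Real.add_one_le_exp (-p)]

section poiBin

variable {K : ℕ}

lemma poiBin_eq_sum_ite (π : Fin K → ℝ) (s : ℕ) :
    poiBin π s = ∑ w : Fin K → Bool,
      if #{k | w k} = s then ∏ k, (if w k then π k else 1 - π k) else 0 := by
  rw [poiBin, sum_filter]
  refine sum_congr rfl fun w _ => if_congr Iff.rfl (prod_congr rfl fun k _ => ?_) rfl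
  cases w k <;> simp

lemma poiBin_fin_zero (π : Fin 0 → ℝ) (s : ℕ) : poiBin π s = if s = 0 then 1 else 0 := by
  rcases s with _ | s <;> simp [poiBin_eq_sum_ite]

lemma poiBin_succ (π : Fin (K + 1) → ℝ) (s : ℕ) :
    poiBin π s = natConv (bernoulliPMF (π 0)) (poiBin (Fin.tail π)) s := by
  rw [poiBin_eq_sum_ite, ← (Fin.consEquiv fun _ => Bool).sum_comp, Fintype.sum_prod_type,
    Fintype.sum_bool]
  rcases s with _ | s
  · rw [natConv_bernoulliPMF_zero, poiBin_eq_sum_ite, mul_sum]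
    simp [Fin.prod_univ_succ, Fin.card_filter_univ_succ, Fin.tail]
  · rw [natConv_bernoulliPMF_succ, poiBin_eq_sum_ite, poiBin_eq_sum_ite, mul_sum, mul_sum,
      add_comm]
    simp [Fin.prod_univ_succ, Fin.card_filter_univ_succ, Fin.tail]

lemma poiBin_nonneg {π : Fin K → ℝ} (hπ : ∀ k, π k ∈ Set.Icc (0 : ℝ) 1) (s : ℕ) :
    0 ≤ poiBin π s :=
  sum_nonneg fun _ _ => prod_nonneg fun k _ =>
    mul_nonneg (pow_nonneg (hπ k).1 _) (pow_nonneg (sub_nonneg.mpr (hπ k).2) _)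

lemma hasSum_poiBin (π : Fin K → ℝ) : HasSum (poiBin π) 1 := by
  induction K with
  | zero =>
    simp_rw [funext (poiBin_fin_zero π)]
    exact hasSum_ite_eq 0 1
  | succ K ih =>
    have hbern := hasSum_bernoulliPMF (π 0)
    convert hasSum_natConv hbern.summable.abs (ih (Fin.tail π)).summable.abs using 1
    · exact funext (poiBin_succ π)
    · rw [hbern.tsum_eq, (ih _).tsum_eq, one_mul]

end poiBin

lemma tsum_abs_poiBin_sub_poissonPMF_le {K : ℕ} (π : Fin K → ℝ)
    (hπ : ∀ k, π k ∈ Set.Icc (0 : ℝ) 1) :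
    ∑' s, |poiBin π s - poissonPMF (∑ k, π k) s| ≤ 2 * ∑ k, π k ^ 2 := by
  induction K with
  | zero =>
    have h : ∀ s, poiBin π s - poissonPMF 0 s = 0 := fun s => by
      rcases s with _ | s <;> simp [poiBin_fin_zero, poissonPMF]
    simp [h]
  | succ K ih =>
    have hπ' : ∀ k, Fin.tail π k ∈ Set.Icc (0 : ℝ) 1 := fun k => hπ k.succ
    have hbern := tsum_abs_bernoulliPMF_sub_poissonPMF_le (hπ 0).1
    have htail := ih (Fin.tail π) hπ'
    rw [Fin.sum_univ_succ, Fin.sum_univ_succ, ← natConv_poissonPMF]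
    simp_rw [poiBin_succ π]
    refine (tsum_abs_natConv_sub_natConv_le (hasSum_bernoulliPMF _).summable.abs
      (hasSum_poissonPMF _).summable.abs (hasSum_poiBin _).summable.abs
      (hasSum_poissonPMF _).summable.abs).trans ?_
    rw [(hasSum_poiBin _).tsum_abs_eq_of_nonneg (poiBin_nonneg hπ'),
      (hasSum_poissonPMF _).tsum_abs_eq_of_nonneg (poissonPMF_nonneg (hπ 0).1)]
    simp only [Fin.tail] at htail
    linarith

theorem law_of_rare_events {K : ℕ} (π : Fin K → ℝ)
    (hπ : ∀ k, π k ∈ Set.Icc (0 : ℝ) 1) (lam : ℝ) (hlam : ∑ k, π k = lam) :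
    (1 / 2) * ∑' s : ℕ, |poiBin π s - poissonPMF lam s| ≤ ∑ k, (π k) ^ 2 := by
  subst hlam
  linarith [tsum_abs_poiBin_sub_poissonPMF_le π hπ]
end

section
/- Conjugacy breaks under restriction: there exist K ≥ 2, N ≥ 1, a binary matrix Z ∈ {0,1}^{N×K} with every row sum equal to 1, and α > 0, such that the restricted posterior density ν(π|Z) ∝ ∏_k π_k^{m_k + α/K - 1}(1-π_k)^{N-m_k} / ∏_n PoiBin(1|π) is not proportional to any product of independent Beta densities ∏_k π_k^{a_k-1}(1-π_k)^{b_k-1}. -/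
/-!
A function of product form `F π = ∏ k, g k (π k)` satisfies `F x * F y = F u * F v` whenever
`u, v` arise from `x, y` by exchanging a set of coordinates. Beta products have product form, and
so has the numerator of the restricted posterior, which moreover does not vanish on the open cube.
Hence if the posterior were proportional to a Beta product, `PoiBin(1|·) ^ N`, and so
`PoiBin(1|·)`, would satisfy this identity as well. For `K = 2` it fails: `PoiBin(1|x) * PoiBin(1|y) = 1/4` for
`x = (1/2, 1/4)`, `y = (1/4, 1/2)`, while exchanging the first coordinates gives
`PoiBin(1|(1/2, 1/2)) * PoiBin(1|(1/4, 1/4)) = 3/16`.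
-/

open Finset

/-- PoiBin(1|π) = Σ_k π_k ∏_{j≠k} (1 - π_j). -/
def poiBinOne {K : ℕ} (π : Fin K → ℝ) : ℝ :=
  ∑ k, π k * ∏ j ∈ Finset.univ.erase k, (1 - π j)

theorem Finset.prod_mul_prod_eq_prod_piecewise_mul_prod_piecewise {ι α M : Type*} [Fintype ι]
    [DecidableEq ι] [CommMonoid M] (g : ι → α → M) (s : Finset ι) (x y : ι → α) :
    (∏ k, g k (x k)) * ∏ k, g k (y k) =
      (∏ k, g k (s.piecewise x y k)) * ∏ k, g k (s.piecewise y x k) := by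
  simp_rw [← prod_mul_distrib]
  refine prod_congr rfl fun k _ => ?_
  by_cases hk : k ∈ s <;> simp [hk, mul_comm]

theorem mul_eq_mul_piecewise_of_prod_div_pow_eq_prod {ι α : Type*} [Fintype ι] [DecidableEq ι]
    {I : Set α} {N : ℕ} (hN : N ≠ 0) {f g : ι → α → ℝ} {D : (ι → α) → ℝ} {c : ℝ}
    (hf : ∀ k, ∀ t ∈ I, f k t ≠ 0) (hD : ∀ π : ι → α, (∀ k, π k ∈ I) → 0 < D π)
    (heq : ∀ π : ι → α, (∀ k, π k ∈ I) → (∏ k, f k (π k)) / D π ^ N = c * ∏ k, g k (π k))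
    (s : Finset ι) {x y : ι → α} (hx : ∀ k, x k ∈ I) (hy : ∀ k, y k ∈ I) :
    D x * D y = D (s.piecewise x y) * D (s.piecewise y x) := by
  have mem_of_piecewise {x y : ι → α} (hx : ∀ k, x k ∈ I) (hy : ∀ k, y k ∈ I) :
      ∀ k, s.piecewise x y k ∈ I :=
    Set.mem_univ_pi.1 (s.piecewise_mem_set_pi (Set.mem_univ_pi.2 hx) (Set.mem_univ_pi.2 hy))
  have hu := mem_of_piecewise hx hy
  have hv := mem_of_piecewise hy hx
  have num (π : ι → α) (hπ : ∀ k, π k ∈ I) :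
      ∏ k, f k (π k) = c * (∏ k, g k (π k)) * D π ^ N := by
    rw [← heq π hπ, div_mul_cancel₀ _ (pow_ne_zero _ (hD π hπ).ne')]
  have hF := prod_mul_prod_eq_prod_piecewise_mul_prod_piecewise f s x y
  have hG := prod_mul_prod_eq_prod_piecewise_mul_prod_piecewise g s x y
  have hF_ne : (∏ k, f k (x k)) * ∏ k, f k (y k) ≠ 0 :=
    mul_ne_zero (prod_ne_zero_iff.2 fun k _ => hf k _ (hx k))
      (prod_ne_zero_iff.2 fun k _ => hf k _ (hy k))
  rw [num x hx, num y hy] at hF hF_ne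
  rw [num _ hu, num _ hv] at hF
  have hG_ne : c * (∏ k, g k (x k)) * (c * ∏ k, g k (y k)) ≠ 0 := by
    contrapose! hF_ne
    linear_combination D x ^ N * D y ^ N * hF_ne
  have hpow : (D x * D y) ^ N = (D (s.piecewise x y) * D (s.piecewise y x)) ^ N := by
    apply mul_left_cancel₀ hG_ne
    linear_combination hF - c ^ 2 * (D (s.piecewise x y) * D (s.piecewise y x)) ^ N * hG
  exact (pow_left_inj₀ (mul_pos (hD x hx) (hD y hy)).le
    (mul_pos (hD _ hu) (hD _ hv)).le hN).1 hpow

lemma poiBinOne_pos {K : ℕ} [NeZero K] {π : Fin K → ℝ} (hπ : ∀ k, π k ∈ Set.Ioo (0 : ℝ) 1) :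
    0 < poiBinOne π :=
  sum_pos (fun k _ => mul_pos (hπ k).1 (prod_pos fun j _ => sub_pos.2 (hπ j).2)) univ_nonempty

noncomputable def restrictedPosterior {K N : ℕ} (Z : Fin N → Fin K → Bool) (α : ℝ)
    (π : Fin K → ℝ) : ℝ :=
  (∏ k, (π k) ^ (((Finset.univ.filter (fun n => Z n k)).card : ℝ) + α / K - 1) *
      (1 - π k) ^ ((N : ℝ) - (Finset.univ.filter (fun n => Z n k)).card)) / (poiBinOne π) ^ N

noncomputable def betaProduct {K : ℕ} (a b : Fin K → ℝ) (π : Fin K → ℝ) : ℝ :=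
  ∏ k, (π k) ^ (a k - 1) * (1 - π k) ^ (b k - 1)

lemma poiBinOne_mul_eq_mul_piecewise_of_restrictedPosterior_eq {K N : ℕ} [NeZero K] (hN : N ≠ 0)
    {Z : Fin N → Fin K → Bool} {α c : ℝ} {a b : Fin K → ℝ}
    (h : ∀ π : Fin K → ℝ, (∀ k, π k ∈ Set.Ioo (0 : ℝ) 1) →
      restrictedPosterior Z α π = c * betaProduct a b π)
    (s : Finset (Fin K)) {x y : Fin K → ℝ}
    (hx : ∀ k, x k ∈ Set.Ioo (0 : ℝ) 1) (hy : ∀ k, y k ∈ Set.Ioo (0 : ℝ) 1) :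
    poiBinOne x * poiBinOne y = poiBinOne (s.piecewise x y) * poiBinOne (s.piecewise y x) :=
  mul_eq_mul_piecewise_of_prod_div_pow_eq_prod
    (g := fun k t => t ^ (a k - 1) * (1 - t) ^ (b k - 1))
    (f := fun k t => t ^ (((Finset.univ.filter (fun n => Z n k)).card : ℝ) + α / K - 1) *
      (1 - t) ^ ((N : ℝ) - (Finset.univ.filter (fun n => Z n k)).card)) hN
    (fun _ _ ht => (mul_pos (Real.rpow_pos_of_pos ht.1 _)
      (Real.rpow_pos_of_pos (sub_pos.2 ht.2) _)).ne')
    (fun _ => poiBinOne_pos) h s hx hy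

lemma poiBinOne_two (π : Fin 2 → ℝ) :
    poiBinOne π = π 0 * (1 - π 1) + π 1 * (1 - π 0) := by
  simp [poiBinOne, Fin.sum_univ_two, show univ.erase (0 : Fin 2) = {1} by decide,
    show univ.erase (1 : Fin 2) = {0} by decide]

lemma poiBinOne_two_mul_ne_mul_piecewise :
    poiBinOne ![1/2, 1/4] * poiBinOne ![1/4, 1/2] ≠
      poiBinOne (({0} : Finset (Fin 2)).piecewise ![1/2, 1/4] ![1/4, 1/2]) *
        poiBinOne (({0} : Finset (Fin 2)).piecewise ![1/4, 1/2] ![1/2, 1/4]) := by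
  norm_num [poiBinOne_two, Finset.piecewise]

theorem restricted_posterior_not_beta_product :
    ∃ (K N : ℕ) (_ : 2 ≤ K) (_ : 1 ≤ N) (Z : Fin N → Fin K → Bool) (α : ℝ), 0 < α ∧
      (∀ n, (Finset.univ.filter (fun k => Z n k)).card = 1) ∧
      ¬ ∃ (c : ℝ) (a b : Fin K → ℝ),
          ∀ π : Fin K → ℝ, (∀ k, π k ∈ Set.Ioo (0 : ℝ) 1) →
            (∏ k, (π k) ^ (((Finset.univ.filter (fun n => Z n k)).card : ℝ) + α / K - 1) *
                (1 - π k) ^ ((N : ℝ) - (Finset.univ.filter (fun n => Z n k)).card)) /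
              (poiBinOne π) ^ N =
            c * ∏ k, (π k) ^ (a k - 1) * (1 - π k) ^ (b k - 1) := by
  refine ⟨2, 1, le_rfl, le_rfl, ![![true, false]], 1, one_pos, by decide, ?_⟩
  rintro ⟨c, a, b, h⟩
  have hx : ∀ k, (![1/2, 1/4] : Fin 2 → ℝ) k ∈ Set.Ioo 0 1 := by
    intro k; fin_cases k <;> norm_num
  have hy : ∀ k, (![1/4, 1/2] : Fin 2 → ℝ) k ∈ Set.Ioo 0 1 := by
    intro k; fin_cases k <;> norm_num
  exact poiBinOne_two_mul_ne_mul_piecewise <|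
    poiBinOne_mul_eq_mul_piecewise_of_restrictedPosterior_eq one_ne_zero h {0} hx hy
end

section
/- For the restricted predictive to equal the directly restricted predictive, a product condition must hold: with Θ finite, ν a prior pmf, μ_θ pmfs on a finite set X, and A ⊆ X with μ_θ(A) > 0 for all θ, if μ_θ(A) takes the same value c for all θ ∈ Θ, then for all N and all x₁,…,x_{N+1} ∈ A, the restricted predictive p^{|A}(x_{N+1}|x₁,…,x_N) defined via per-θ normalization equals the directly restricted predictive p^{*|A}(x_{N+1}|x₁,…,x_N) ∝ Σ_θ ν(θ)∏_{i=1}^{N+1} μ_θ(x_i). -/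
open Finset

theorem constant_normalizer_restricted_eq_direct
    {Θ X : Type*} [Fintype Θ] [Fintype X] [DecidableEq X]
    (ν : Θ → ℝ) (hν : ∀ θ, 0 ≤ ν θ) (hν1 : ∑ θ, ν θ = 1)
    (μ : Θ → X → ℝ) (hμ : ∀ θ x, 0 ≤ μ θ x) (hμ1 : ∀ θ, ∑ x, μ θ x = 1)
    (A : Finset X) (hApos : ∀ θ, 0 < ∑ a ∈ A, μ θ a)
    (c : ℝ) (hc : ∀ θ, ∑ a ∈ A, μ θ a = c)
    (μres : Θ → X → ℝ)
    (hres : ∀ θ x, μres θ x = μ θ x * (if x ∈ A then 1 else 0) / ∑ a ∈ A, μ θ a)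
    (N : ℕ) (x : Fin N → X) (hx : ∀ i, x i ∈ A) (xnew : X) (hxnew : xnew ∈ A) :
    -- the restricted predictive (per-θ normalization) ...
    (∑ θ, ν θ * (∏ i, μres θ (x i)) * μres θ xnew) /
        (∑ y ∈ A, ∑ θ, ν θ * (∏ i, μres θ (x i)) * μres θ y) =
      -- ... equals the directly restricted predictive
      (∑ θ, ν θ * (∏ i, μ θ (x i)) * μ θ xnew) /
        (∑ y ∈ A, ∑ θ, ν θ * (∏ i, μ θ (x i)) * μ θ y) := by
  rcases isEmpty_or_nonempty Θ with hΘ | ⟨⟨θ0⟩⟩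
  · simp
  · have hc0 : 0 < c := hc θ0 ▸ hApos θ0
    have hres' : ∀ θ, ∀ a, a ∈ A → μres θ a = μ θ a / c := by
      intro θ a ha
      rw [hres, if_pos ha, mul_one, hc]
    have key : ∀ θ, ∀ y, y ∈ A →
        ν θ * (∏ i, μres θ (x i)) * μres θ y
          = (ν θ * (∏ i, μ θ (x i)) * μ θ y) / c ^ (N + 1) := by
      intro θ y hy
      rw [hres' θ y hy]
      have : (∏ i, μres θ (x i)) = (∏ i, μ θ (x i)) / c ^ N := by
        rw [Finset.prod_congr rfl (fun i _ => hres' θ (x i) (hx i)),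
          Finset.prod_div_distrib]
        simp
      rw [this, pow_succ]
      ring
    have hnum : (∑ θ, ν θ * (∏ i, μres θ (x i)) * μres θ xnew)
        = (∑ θ, ν θ * (∏ i, μ θ (x i)) * μ θ xnew) / c ^ (N + 1) := by
      rw [Finset.sum_div]
      exact Finset.sum_congr rfl fun θ _ => key θ xnew hxnew
    have hden : (∑ y ∈ A, ∑ θ, ν θ * (∏ i, μres θ (x i)) * μres θ y)
        = (∑ y ∈ A, ∑ θ, ν θ * (∏ i, μ θ (x i)) * μ θ y) / c ^ (N + 1) := by
      rw [Finset.sum_div]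
      refine Finset.sum_congr rfl fun y hy => ?_
      rw [Finset.sum_div]
      exact Finset.sum_congr rfl fun θ _ => key θ y hy
    rw [hnum, hden]
    have hk : (c : ℝ) ^ (N + 1) ≠ 0 := pow_ne_zero _ (ne_of_gt hc0)
    rw [div_div_div_eq, mul_comm (c ^ (N + 1)), mul_div_mul_right _ _ hk]
end
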